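/- arXiv:2012.09194 — 2 statements merged into one kernel-verified Lean document; each statement's English description precedes it below -/
import Mathlib

section
/- Let τ, ν be complex n×n matrices, X = ∑_{j,k,m} τ_{j,k} ν_{k,m} A_j† N_m A_k on the fermionic Fock space of n modes. Then the fermionic η-seminorm satisfies ‖X‖_η ≤ ‖τ‖ ‖ν‖_max η², where ‖τ‖ is the spectral norm of τ and ‖ν‖_max = max_{l,m}|ν_{l,m}|. -/
open Matrix
noncomputable section

/-- A fermionic occupation configuration on `n` modes. -/
abbrev Config (n : ℕ) := Fin n → Bool

/-- The fermionic Fock space on `n` modes. -/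
abbrev Fock (n : ℕ) := EuclideanSpace ℂ (Config n)

/-- Hamming weight (number of occupied modes) of a configuration. -/
def wt {n : ℕ} (c : Config n) : ℕ := (Finset.univ.filter fun k => c k = true).card

/-- The Jordan–Wigner sign `(-1)^{∑_{k<j} c_k}`. -/
def signFactor {n : ℕ} (j : Fin n) (c : Config n) : ℂ :=
  (-1 : ℂ) ^ ((Finset.univ.filter fun k => k < j ∧ c k = true).card)

/-- The fermionic creation operator `A_j†`, as a matrix in the occupation basis. -/
def createM {n : ℕ} (j : Fin n) : Matrix (Config n) (Config n) ℂ :=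
  Matrix.of fun c' c =>
    if c j = false ∧ c' = Function.update c j true then signFactor j c else 0

/-- The fermionic annihilation operator `A_j`, the Hermitian adjoint of `A_j†`. -/
def annM {n : ℕ} (j : Fin n) : Matrix (Config n) (Config n) ℂ := (createM j)ᴴ

/-- The occupation-number operator `N_j = A_j† A_j`. -/
def numM {n : ℕ} (j : Fin n) : Matrix (Config n) (Config n) ℂ := createM j * annM j

/-- The particle-number operator `N = ∑_j N_j`. -/
def totalNumM (n : ℕ) : Matrix (Config n) (Config n) ℂ := ∑ j, numM j

/-- Orthogonal projection `Π_η` onto the `η`-electron subspace. -/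
def projM (n η : ℕ) : Matrix (Config n) (Config n) ℂ :=
  Matrix.of fun c' c => if c' = c ∧ wt c = η then 1 else 0

/-- An operator is number-preserving iff it commutes with every `Π_η`. -/
def NumberPreserving {n : ℕ} (X : Matrix (Config n) (Config n) ℂ) : Prop :=
  ∀ η : ℕ, projM n η * X = X * projM n η

/-- Apply a matrix to a Fock-space vector, as a continuous linear map. -/
def appM {n : ℕ} (A : Matrix (Config n) (Config n) ℂ) : Fock n →L[ℂ] Fock n :=
  Matrix.toEuclideanCLM (𝕜 := ℂ) A

/-- Spectral norm of a matrix (operator norm on the Euclidean space). -/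
def specNorm {m : Type*} [Fintype m] [DecidableEq m] (A : Matrix m m ℂ) : ℝ :=
  ‖Matrix.toEuclideanCLM (𝕜 := ℂ) A‖

/-- The fermionic `η`-seminorm `‖X‖_η = ‖X Π_η‖`. -/
def fsem {n : ℕ} (η : ℕ) (X : Matrix (Config n) (Config n) ℂ) : ℝ :=
  specNorm (X * projM n η)

/-- Max-norm: largest matrix entry in absolute value. -/
def maxNorm {m : Type*} [Fintype m] (A : Matrix m m ℂ) : ℝ := ⨆ i, ⨆ j, ‖A i j‖

/-!
Stack the annihilation operators into one map `𝒜 = (A_1; …; A_n)` from Fock space to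
`ℂⁿ ⊗ Fock`. Then `X = 𝒜† (τ ⊗ 1) D 𝒜` with `D` diagonal, equal to `∑_m ν_{km} N_m` on the
`k`-th block, and `𝒜† 𝒜 = N`. Since `𝒜 Π_η = Π' 𝒜` with `Π'` the projection onto the
`(η - 1)`-electron sector, `X Π_η = (𝒜 Π_η)† (τ ⊗ 1) (D Π') (𝒜 Π_η)`. Here
`‖𝒜 Π_η‖² = ‖Π_η N Π_η‖ ≤ η`, `‖τ ⊗ 1‖ ≤ ‖τ‖`, and on the `(η - 1)`-electron sector at most
`η` modes are occupied, so `‖D Π'‖ ≤ η ‖ν‖_max`.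
-/

open scoped Matrix.Norms.L2Operator Kronecker

section Stacking

variable {α ι κ m n p : Type*}

def stackRows (A : ι → Matrix m n α) : Matrix (ι × m) n α := of fun x j => A x.1 x.2 j

lemma stackRows_mul [Fintype n] [NonUnitalNonAssocSemiring α] (A : ι → Matrix m n α)
    (P : Matrix n p α) : stackRows A * P = stackRows fun i => A i * P := by
  ext ⟨i, x⟩ b
  simp [stackRows, mul_apply]

variable [Fintype m]

lemma conjTranspose_stackRows_mul_stackRows [Fintype ι] [NonUnitalNonAssocSemiring α] [Star α]
    (A : ι → Matrix m n α) (B : ι → Matrix m p α) :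
    (stackRows A)ᴴ * stackRows B = ∑ i, (A i)ᴴ * B i := by
  ext a b
  simp [mul_apply, stackRows, Fintype.sum_prod_type, Matrix.sum_apply]

lemma one_kronecker_mul_stackRows [Fintype ι] [DecidableEq ι] [NonAssocSemiring α]
    (Q : Matrix m m α) (B : ι → Matrix m n α) :
    ((1 : Matrix ι ι α) ⊗ₖ Q) * stackRows B = stackRows fun i => Q * B i := by
  ext ⟨i, x⟩ b
  simp [mul_apply, stackRows, Fintype.sum_prod_type, one_apply]

variable [DecidableEq m]

lemma kronecker_one_mul_stackRows [Fintype κ] [NonAssocSemiring α] (T : Matrix ι κ α)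
    (B : κ → Matrix m n α) :
    (T ⊗ₖ (1 : Matrix m m α)) * stackRows B = stackRows fun i => ∑ k, T i k • B k := by
  ext ⟨i, x⟩ b
  simp [mul_apply, stackRows, Fintype.sum_prod_type, Matrix.sum_apply, one_apply]

lemma diagonal_mul_stackRows [Fintype ι] [DecidableEq ι] [NonUnitalNonAssocSemiring α]
    (d : ι × m → α) (B : ι → Matrix m n α) :
    diagonal d * stackRows B = stackRows fun i => diagonal (fun x => d (i, x)) * B i := by
  ext ⟨i, x⟩ b
  simp [stackRows]

end Stacking

lemma conjTranspose_mul_mul_mul_of_intertwines {α k l : Type*} [Fintype k] [Fintype l]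
    [NonUnitalCommSemiring α] [StarRing α] {S : Matrix k l α} {P : Matrix l l α}
    {Q M : Matrix k k α} (hSP : S * P = Q * S) (hQ : Qᴴ = Q) (hQQ : Q * Q = Q)
    (hMQ : M * Q = Q * M) :
    Sᴴ * M * S * P = (S * P)ᴴ * (M * Q) * (S * P) := by
  rw [hSP, conjTranspose_mul, hQ]
  calc Sᴴ * M * S * P = Sᴴ * M * (Q * Q * Q * S) := by
        rw [hQQ, hQQ, ← hSP, Matrix.mul_assoc _ S]
    _ = Sᴴ * (Q * M) * Q * (Q * S) := by
        rw [← hMQ]; simp only [Matrix.mul_assoc]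
    _ = _ := by simp only [Matrix.mul_assoc]

lemma kronecker_one_mulVec_apply {α ι κ m : Type*} [Fintype κ] [Fintype m] [DecidableEq m]
    [NonAssocSemiring α] (A : Matrix ι κ α) (x : κ × m → α) (i : ι) (c : m) :
    ((A ⊗ₖ (1 : Matrix m m α)) *ᵥ x) (i, c) = (A *ᵥ fun k => x (k, c)) i := by
  simp [mulVec, dotProduct, one_apply, Fintype.sum_prod_type]

lemma l2_opNorm_kronecker_one_le {𝕜 ι κ m : Type*} [RCLike 𝕜] [Fintype ι] [Fintype κ]
    [Fintype m] [DecidableEq κ] [DecidableEq m] (A : Matrix ι κ 𝕜) :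
    ‖A ⊗ₖ (1 : Matrix m m 𝕜)‖ ≤ ‖A‖ := by
  rw [l2_opNorm_def]
  refine ContinuousLinearMap.opNorm_le_bound _ (norm_nonneg _) fun x => ?_
  let y : m → EuclideanSpace 𝕜 κ := fun c => WithLp.toLp 2 fun k => x (k, c)
  have hx : ‖x‖ ^ 2 = ∑ c, ‖y c‖ ^ 2 := by
    simp only [EuclideanSpace.norm_sq_eq, Fintype.sum_prod_type, y]
    exact Finset.sum_comm
  refine (sq_le_sq₀ (norm_nonneg _) (by positivity)).mp ?_
  calc _ = ∑ c, ‖(EuclideanSpace.equiv ι 𝕜).symm (A *ᵥ y c)‖ ^ 2 := by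
        simp only [LinearEquiv.trans_apply, LinearMap.coe_toContinuousLinearMap', ofLp_toLpLin,
          toLin'_apply, PiLp.continuousLinearEquiv_symm_apply, EuclideanSpace.norm_sq_eq,
          Fintype.sum_prod_type, kronecker_one_mulVec_apply, y]
        exact Finset.sum_comm
    _ ≤ ∑ c, (‖A‖ * ‖y c‖) ^ 2 := by
        gcongr with c
        exact l2_opNorm_mulVec A (y c)
    _ = (‖A‖ * ‖x‖) ^ 2 := by rw [mul_pow, hx, Finset.mul_sum]; simp [mul_pow]

lemma l2_opNorm_conjTranspose_mul_mul_le {𝕜 k l : Type*} [RCLike 𝕜] [Fintype k] [Fintype l]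
    [DecidableEq k] [DecidableEq l] (S : Matrix k l 𝕜) (M : Matrix k k 𝕜) :
    ‖Sᴴ * M * S‖ ≤ ‖M‖ * ‖S‖ ^ 2 := by
  calc ‖Sᴴ * M * S‖ ≤ ‖Sᴴ‖ * ‖M‖ * ‖S‖ := by grw [l2_opNorm_mul, l2_opNorm_mul]
    _ = ‖M‖ * ‖S‖ ^ 2 := by rw [l2_opNorm_conjTranspose]; ring

lemma norm_le_maxNorm {m : Type*} [Fintype m] (A : Matrix m m ℂ) (i j : m) :
    ‖A i j‖ ≤ maxNorm A :=
  (le_ciSup (Set.finite_range _).bddAbove j).trans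
    (le_ciSup (f := fun i => ⨆ j, ‖A i j‖) (Set.finite_range _).bddAbove i)

lemma maxNorm_nonneg {m : Type*} [Fintype m] (A : Matrix m m ℂ) : 0 ≤ maxNorm A :=
  Real.iSup_nonneg fun _ => Real.iSup_nonneg fun _ => norm_nonneg _

section Fermions

variable {n : ℕ}

lemma wt_update_true {c : Config n} {k : Fin n} (h : c k = false) :
    wt (Function.update c k true) = wt c + 1 := by
  have hfilter : (Finset.univ.filter fun i => Function.update c k true i = true) =
      insert k (Finset.univ.filter fun i => c i = true) := by
    ext i
    by_cases hik : i = k <;> simp [Function.update_apply, hik]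
  rw [wt, wt, hfilter, Finset.card_insert_of_notMem (by simp [h])]

lemma createM_apply_ne_zero {j : Fin n} {c' c : Config n} (h : createM j c' c ≠ 0) :
    c j = false ∧ c' = Function.update c j true := by
  by_contra h'
  simp [createM, h'] at h

lemma numM_eq_diagonal (m : Fin n) : numM m = diagonal fun c => if c m then 1 else 0 := by
  ext c' c
  have hd : ∀ d, d ≠ Function.update c m false → createM m c d = 0 := by
    intro d hd
    by_contra h
    obtain ⟨hdm, rfl⟩ := createM_apply_ne_zero h
    exact hd (by simp [hdm])
  rw [numM, annM, mul_apply,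
    Fintype.sum_eq_single (Function.update c m false) fun d h => by simp [hd d h]]
  by_cases hcc : c' = c
  · subst hcc
    by_cases hc : c' m = true
    · simp [createM, signFactor, hc, ← mul_pow]
    · simp [createM, hc]
  · rw [diagonal_apply_ne _ hcc, conjTranspose_apply]
    by_contra h
    obtain ⟨h1, h2⟩ := mul_ne_zero_iff.mp h
    exact hcc ((createM_apply_ne_zero h1).2.trans
      (createM_apply_ne_zero (star_ne_zero.mp h2)).2.symm)

lemma totalNumM_eq_diagonal : totalNumM n = diagonal fun c => (wt c : ℂ) := by
  simp only [totalNumM, numM_eq_diagonal, ← diagonalAddMonoidHom_apply, ← map_sum]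
  congr 1
  ext c
  simp [wt]

lemma projM_eq_diagonal (η : ℕ) :
    projM n η = diagonal fun c => if wt c = η then 1 else 0 := by
  ext c' c
  by_cases h : c' = c <;> simp [projM, h]

-- `Π_{η-1}`, written so that it vanishes for `η = 0` instead of truncating to `Π_0`.
def projBelowM (n η : ℕ) : Matrix (Config n) (Config n) ℂ :=
  diagonal fun c => if wt c + 1 = η then 1 else 0

lemma annM_mul_projM (k : Fin n) (η : ℕ) : annM k * projM n η = projBelowM n η * annM k := by
  ext c' c
  rw [projM_eq_diagonal, projBelowM, mul_diagonal, diagonal_mul]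
  by_cases h : annM k c' c = 0
  · simp [h]
  · obtain ⟨hk, rfl⟩ := createM_apply_ne_zero (j := k) (c' := c) (by simpa [annM] using h)
    simp [wt_update_true hk, mul_comm]

def annStack (n : ℕ) : Matrix (Fin n × Config n) (Config n) ℂ := stackRows annM

def occupationWeights (ν : Matrix (Fin n) (Fin n) ℂ) (x : Fin n × Config n) : ℂ :=
  ∑ m, ν x.1 m * if x.2 m then 1 else 0

lemma norm_occupationWeights_le (ν : Matrix (Fin n) (Fin n) ℂ) (x : Fin n × Config n) :
    ‖occupationWeights ν x‖ ≤ maxNorm ν * wt x.2 := by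
  calc ‖occupationWeights ν x‖ ≤ ∑ m, ‖ν x.1 m‖ * if x.2 m then 1 else 0 := by
        refine (norm_sum_le _ _).trans (le_of_eq ?_)
        congr 1; ext m; split_ifs <;> simp
    _ ≤ ∑ m, maxNorm ν * if x.2 m then 1 else 0 := by
        gcongr with m
        exact norm_le_maxNorm ν _ _
    _ = maxNorm ν * wt x.2 := by rw [← Finset.mul_sum]; simp [wt]

lemma diagonal_occupationWeights (ν : Matrix (Fin n) (Fin n) ℂ) (k : Fin n) :
    diagonal (fun c => occupationWeights ν (k, c)) = ∑ m, ν k m • numM m := by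
  ext c c'
  by_cases h : c = c' <;> simp [occupationWeights, numM_eq_diagonal, Matrix.sum_apply, h]

lemma sum_createM_numM_annM_eq_annStack (τ ν : Matrix (Fin n) (Fin n) ℂ) :
    ∑ j, ∑ k, ∑ m, (τ j k * ν k m) • (createM j * numM m * annM k) =
      (annStack n)ᴴ * (τ ⊗ₖ (1 : Matrix (Config n) (Config n) ℂ)) *
        diagonal (occupationWeights ν) * annStack n := by
  rw [Matrix.mul_assoc, Matrix.mul_assoc, annStack, diagonal_mul_stackRows,
    kronecker_one_mul_stackRows, conjTranspose_stackRows_mul_stackRows]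
  simp only [diagonal_occupationWeights, annM, conjTranspose_conjTranspose, Matrix.mul_sum,
    Finset.sum_mul, Matrix.mul_smul, Matrix.smul_mul, smul_smul, Finset.smul_sum, Matrix.mul_assoc]

lemma conjTranspose_annStack_mul_annStack : (annStack n)ᴴ * annStack n = totalNumM n := by
  simp [annStack, conjTranspose_stackRows_mul_stackRows, totalNumM, numM, annM]

lemma annStack_mul_projM (η : ℕ) :
    annStack n * projM n η = ((1 : Matrix (Fin n) (Fin n) ℂ) ⊗ₖ projBelowM n η) * annStack n := by
  simp only [annStack, stackRows_mul, one_kronecker_mul_stackRows, annM_mul_projM]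

lemma norm_annStack_mul_projM_sq_le (η : ℕ) : ‖annStack n * projM n η‖ ^ 2 ≤ η := by
  have hP : (projM n η)ᴴ = projM n η := by
    simp [projM_eq_diagonal, diagonal_conjTranspose]
  rw [sq, ← l2_opNorm_conjTranspose_mul_self, conjTranspose_mul, hP, Matrix.mul_assoc,
    ← Matrix.mul_assoc (annStack n)ᴴ, conjTranspose_annStack_mul_annStack, totalNumM_eq_diagonal,
    projM_eq_diagonal, diagonal_mul_diagonal, diagonal_mul_diagonal, l2_opNorm_diagonal,
    pi_norm_le_iff_of_nonneg (Nat.cast_nonneg η)]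
  intro c
  by_cases hc : wt c = η <;> simp [hc]

lemma one_kronecker_projBelowM (η : ℕ) :
    (1 : Matrix (Fin n) (Fin n) ℂ) ⊗ₖ projBelowM n η =
      diagonal fun x => if wt x.2 + 1 = η then 1 else 0 := by
  rw [projBelowM, ← diagonal_one, diagonal_kronecker_diagonal]
  simp

lemma norm_diagonal_occupationWeights_mul_le (ν : Matrix (Fin n) (Fin n) ℂ) (η : ℕ) :
    ‖diagonal (occupationWeights ν) * ((1 : Matrix (Fin n) (Fin n) ℂ) ⊗ₖ projBelowM n η)‖ ≤
      maxNorm ν * η := by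
  rw [one_kronecker_projBelowM, diagonal_mul_diagonal, l2_opNorm_diagonal,
    pi_norm_le_iff_of_nonneg (mul_nonneg (maxNorm_nonneg ν) (Nat.cast_nonneg η))]
  intro x
  by_cases hx : wt x.2 + 1 = η
  · simp only [hx, if_true, mul_one]
    refine (norm_occupationWeights_le ν x).trans ?_
    gcongr
    · exact maxNorm_nonneg ν
    · omega
  · simp [hx, mul_nonneg (maxNorm_nonneg ν) (Nat.cast_nonneg η)]

lemma sum_createM_numM_annM_mul_projM_eq (τ ν : Matrix (Fin n) (Fin n) ℂ) (η : ℕ) :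
    (∑ j, ∑ k, ∑ m, (τ j k * ν k m) • (createM j * numM m * annM k)) * projM n η =
      (annStack n * projM n η)ᴴ *
        ((τ ⊗ₖ (1 : Matrix (Config n) (Config n) ℂ)) *
          (diagonal (occupationWeights ν) * ((1 : Matrix (Fin n) (Fin n) ℂ) ⊗ₖ projBelowM n η))) *
        (annStack n * projM n η) := by
  have hTQ : (τ ⊗ₖ (1 : Matrix (Config n) (Config n) ℂ)) * (1 ⊗ₖ projBelowM n η) =
      (1 ⊗ₖ projBelowM n η) * (τ ⊗ₖ 1) := by
    rw [← mul_kronecker_mul, ← mul_kronecker_mul, Matrix.mul_one, Matrix.one_mul,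
      Matrix.one_mul, Matrix.mul_one]
  have hDQ : diagonal (occupationWeights ν) * (1 ⊗ₖ projBelowM n η) =
      (1 ⊗ₖ projBelowM n η) * diagonal (occupationWeights ν) := by
    simp only [one_kronecker_projBelowM, diagonal_mul_diagonal, mul_comm]
  rw [sum_createM_numM_annM_eq_annStack, Matrix.mul_assoc (annStack n)ᴴ,
    ← Matrix.mul_assoc (τ ⊗ₖ _)]
  refine conjTranspose_mul_mul_mul_of_intertwines (annStack_mul_projM η) ?_ ?_ ?_
  · simp [one_kronecker_projBelowM, diagonal_conjTranspose, apply_ite]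
  · simp [one_kronecker_projBelowM, diagonal_mul_diagonal]
  · rw [Matrix.mul_assoc, hDQ, ← Matrix.mul_assoc, hTQ, Matrix.mul_assoc]

end Fermions

/-- **Seminorm bound for `∑_{j,k,m} τ_{j,k} ν_{k,m} A_j† N_m A_k`:**
`‖X‖_η ≤ ‖τ‖ ‖ν‖_max η²`. -/
theorem fsem_bound_first_term {n η : ℕ}
    (τ ν : Matrix (Fin n) (Fin n) ℂ) :
    fsem η (∑ j, ∑ k, ∑ m, (τ j k * ν k m) • (createM j * numM m * annM k)) ≤
      specNorm τ * maxNorm ν * (η : ℝ) ^ 2 := by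
  have hτ : ‖τ ⊗ₖ (1 : Matrix (Config n) (Config n) ℂ)‖ ≤ specNorm τ :=
    l2_opNorm_kronecker_one_le τ
  have hν := norm_diagonal_occupationWeights_mul_le ν η
  have hS := norm_annStack_mul_projM_sq_le (n := n) η
  have hτ₀ : 0 ≤ specNorm τ := norm_nonneg _
  have hν₀ : 0 ≤ maxNorm ν := maxNorm_nonneg ν
  rw [fsem, specNorm, l2_opNorm_toEuclideanCLM, sum_createM_numM_annM_mul_projM_eq]
  refine (l2_opNorm_conjTranspose_mul_mul_le _ _).trans ?_
  grw [l2_opNorm_mul, hτ, hν, hS]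
  exact le_of_eq (by ring)
end
end

section
/- Let T = ∑_{j,k=0}^{n-1} A_j† A_k and V = ∑_{x,y=0}^{n/2-1} N_x N_y on the fermionic Fock space of n modes, n even, and let η ≤ n/2. Then the commutator [V,T], projected onto the span of the two states |ψ₀⟩ = |0 1^{η-1} 0^{n/2-η} 1 0^{n/2-1}⟩ and |ψ₁⟩ = |1 1^{η-1} 0^{n/2-η} 0 0^{n/2-1}⟩, equals (∑_{x=0}^{n/2-1} N_x)(A₀†A_{n/2} − A_{n/2}†A₀) + (A₀†A_{n/2} − A_{n/2}†A₀)(∑_{y=0}^{n/2-1} N_y), and consequently for the state |ψ_η⟩ = (|ψ₀⟩ + i|ψ₁⟩)/√2 one has |⟨ψ_η|[V,T]|ψ_η⟩| ≥ 2η − O(1); in particular ‖[V,T]‖_η = Ω(η). -/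
open Matrix
noncomputable section

/-- `T = ∑_{j,k=0}^{n-1} A_j†A_k`. -/
def Tall (n : ℕ) : Matrix (Config n) (Config n) ℂ :=
  ∑ j : Fin n, ∑ k : Fin n, createM j * annM k

/-- `V = ∑_{x,y=0}^{n/2-1} N_x N_y`. -/
def Vhalf (n : ℕ) : Matrix (Config n) (Config n) ℂ :=
  ∑ x : Fin n, ∑ y : Fin n,
    if (x : ℕ) < n / 2 ∧ (y : ℕ) < n / 2 then numM x * numM y else 0

/-- `∑_{x=0}^{n/2-1} N_x`. -/
def Nhalf (n : ℕ) : Matrix (Config n) (Config n) ℂ :=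
  ∑ x : Fin n, if (x : ℕ) < n / 2 then numM x else 0

/-- the configuration `|0 1^{η-1} 0⋯0 1 0⋯0⟩` (one at position `n/2`). -/
def conf0 (n η : ℕ) : Config n :=
  fun i => decide ((1 ≤ (i : ℕ) ∧ (i : ℕ) < η) ∨ (i : ℕ) = n / 2)

/-- the configuration `|1^η 0⋯0⟩`. -/
def conf1 (n η : ℕ) : Config n := fun i => decide ((i : ℕ) < η)

/-- the occupation basis vector of a configuration. -/
def basisVec {n : ℕ} (c : Config n) : Fock n := EuclideanSpace.single c 1

/-- orthogonal projection onto `span{|ψ₀⟩, |ψ₁⟩}`. -/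
def projTwo (n η : ℕ) : Matrix (Config n) (Config n) ℂ :=
  Matrix.of fun a b =>
    (if a = conf0 n η ∧ b = conf0 n η then 1 else 0) +
    (if a = conf1 n η ∧ b = conf1 n η then 1 else 0)

/-- the hopping operator `A₀†A_{n/2} − A_{n/2}†A₀`. -/
def hopM (n : ℕ) (h0 : 0 < n) : Matrix (Config n) (Config n) ℂ :=
  createM (⟨0, h0⟩ : Fin n) * annM (⟨n / 2, Nat.div_lt_self h0 one_lt_two⟩ : Fin n) -
  createM (⟨n / 2, Nat.div_lt_self h0 one_lt_two⟩ : Fin n) * annM (⟨0, h0⟩ : Fin n)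

/-- the state `(|ψ₀⟩ + i|ψ₁⟩)/√2`. -/
def psiEta (n η : ℕ) : Fock n :=
  ((Real.sqrt 2 : ℂ))⁻¹ • (basisVec (conf0 n η) + Complex.I • basisVec (conf1 n η))


/-!
Let `N = ∑_{x<n/2} N_x`; it is diagonal in the occupation basis, with eigenvalue `ν(c)` the number
of occupied modes of `c` in the first half. Then `V = N²`, so `[V,T] = N[N,T] + [N,T]N`, and the
projection `Π` is diagonal too, hence commutes with `N`: the first claim reduces to
`Π[N,T]Π = ΠHΠ` for the hopping operator `H = A₀†A_{n/2} − A_{n/2}†A₀`. Both `ψ₀` and `ψ₁` arise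
from the core `|0 1^{η-1} 0⋯0⟩` by filling mode `n/2`, resp. mode `0`, so the only term `A_j†A_k`
of `T` connecting them moves that electron and is a term of `H`, while `ν(ψ₁) = ν(ψ₀) + 1`.

The same computation gives `⟨ψ_η|[V,T]|ψ_η⟩ = i (ν(ψ₀)² − ν(ψ₁)²) T_{ψ₁ψ₀}`, where the entry of `T`
is a Jordan–Wigner sign, so its modulus is `η² − (η − 1)² = 2η − 1`. As `ψ_η` is a unit vector in
the `η`-electron sector, this also bounds `‖[V,T]‖_η` from below.
-/

open Finset Function

lemma mul_self_lie {R : Type*} [Ring R] (a b : R) : ⁅a * a, b⁆ = a * ⁅a, b⁆ + ⁅a, b⁆ * a := by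
  simp only [Ring.lie_def]
  noncomm_ring

lemma Commute.mul_add_mul_compress {R : Type*} [Ring R] {p a : R} (h : Commute p a) (y : R) :
    p * (a * y + y * a) * p = a * (p * y * p) + (p * y * p) * a := by
  rw [mul_add, add_mul, ← mul_assoc p a, h.eq]
  simp only [mul_assoc]
  rw [← h.eq]

lemma diagonal_lie_apply {ι R : Type*} [Fintype ι] [DecidableEq ι] [CommRing R]
    (w : ι → R) (X : Matrix ι ι R) (a b : ι) :
    ⁅diagonal w, X⁆ a b = (w a - w b) * X a b := by
  rw [Ring.lie_def, Matrix.sub_apply, diagonal_mul, mul_diagonal]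
  ring

lemma diagonal_mul_mul_diagonal_congr {ι R : Type*} [Fintype ι] [DecidableEq ι] [CommRing R]
    {w : ι → R} {X Y : Matrix ι ι R} (h : ∀ a b, w a ≠ 0 → w b ≠ 0 → X a b = Y a b) :
    diagonal w * X * diagonal w = diagonal w * Y * diagonal w := by
  ext a b
  simp only [mul_diagonal, diagonal_mul]
  by_cases ha : w a = 0
  · simp [ha]
  by_cases hb : w b = 0
  · simp [hb]
  rw [h a b ha hb]

lemma norm_inner_apply_le_opNorm {𝕜 E : Type*} [RCLike 𝕜] [NormedAddCommGroup E]
    [InnerProductSpace 𝕜 E] (A : E →L[𝕜] E) {x : E} (hx : ‖x‖ = 1) :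
    ‖inner 𝕜 x (A x)‖ ≤ ‖A‖ :=
  calc ‖inner 𝕜 x (A x)‖ ≤ ‖x‖ * ‖A x‖ := norm_inner_le_norm _ _
    _ ≤ ‖x‖ * (‖A‖ * ‖x‖) := by gcongr; exact A.le_opNorm x
    _ = ‖A‖ := by rw [hx, one_mul, mul_one]

section Operators

variable {n : ℕ}

lemma signFactor_mul_self (j : Fin n) (c : Config n) : signFactor j c * signFactor j c = 1 := by
  simp [signFactor, ← pow_add, Even.neg_one_pow ⟨_, rfl⟩]

lemma norm_signFactor (j : Fin n) (c : Config n) : ‖signFactor j c‖ = 1 := by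
  simp [signFactor]

lemma update_true_eq_iff {d b : Config n} {k : Fin n} :
    (d k = false ∧ b = update d k true) ↔ (b k = true ∧ d = update b k false) := by
  constructor
  · rintro ⟨hd, rfl⟩
    simp [hd]
  · rintro ⟨hb, rfl⟩
    simp [hb]

lemma annM_apply (k : Fin n) (d b : Config n) :
    annM k d b = if b k = true ∧ d = update b k false then signFactor k d else 0 := by
  simp only [annM, conjTranspose_apply, createM, of_apply, ← update_true_eq_iff]
  split <;> simp [signFactor]

lemma createM_mul_annM_apply (j k : Fin n) (a b : Config n) :
    (createM j * annM k) a b =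
      if b k = true ∧ update b k false j = false ∧ a = update (update b k false) j true
      then signFactor j (update b k false) * signFactor k (update b k false) else 0 := by
  simp only [mul_apply, annM_apply, mul_ite, mul_zero, ite_and, sum_ite_irrel, sum_ite_eq',
    mem_univ, if_true, createM, of_apply, sum_const_zero, ite_mul, zero_mul]

lemma numM_apply (j : Fin n) (a b : Config n) :
    numM j a b = if a = b ∧ b j = true then 1 else 0 := by
  rw [numM, createM_mul_annM_apply]
  by_cases hbj : b j = true
  · have hb : update b j true = b := by simp [← hbj]
    simp [hbj, hb, signFactor_mul_self]
  · simp [hbj]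

lemma createM_mul_annM_apply_self {j k : Fin n} (hjk : j ≠ k) (c : Config n) :
    (createM j * annM k) c c = 0 := by
  rw [createM_mul_annM_apply, if_neg]
  rintro ⟨hck, -, hc⟩
  simpa [hjk.symm, hck] using congrFun hc k

lemma createM_mul_annM_apply_update {d : Config n} {j k : Fin n} (hjk : j ≠ k)
    (hj : d j = false) (hk : d k = false) (j' k' : Fin n) :
    (createM j' * annM k') (update d j true) (update d k true) =
      if j' = j ∧ k' = k then signFactor j d * signFactor k d else 0 := by
  rw [createM_mul_annM_apply]
  by_cases h : j' = j ∧ k' = k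
  · obtain ⟨rfl, rfl⟩ := h
    have hd : update d k' false = d := by simp [hk]
    simp [hj, hjk, hd]
  · rw [if_neg h, if_neg]
    rintro ⟨h1, h2, h3⟩
    have e1 := congrFun h3 j
    have e2 := congrFun h3 k
    have e3 := congrFun h3 j'
    have e4 := congrFun h3 k'
    simp only [update_apply] at h1 h2 e1 e2 e3 e4
    grind

lemma Tall_apply_update {d : Config n} {j k : Fin n} (hjk : j ≠ k)
    (hj : d j = false) (hk : d k = false) :
    Tall n (update d j true) (update d k true) = signFactor j d * signFactor k d := by
  simp [Tall, Matrix.sum_apply, createM_mul_annM_apply_update hjk hj hk, ite_and]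

def occupiedIn (s : Finset (Fin n)) (c : Config n) : ℕ := #{x ∈ s | c x = true}

lemma occupiedIn_update_true {s : Finset (Fin n)} {d : Config n} {j : Fin n} (hj : d j = false) :
    occupiedIn s (update d j true) = occupiedIn s d + if j ∈ s then 1 else 0 := by
  split_ifs with hjs
  · have : {x ∈ s | update d j true x = true} = insert j {x ∈ s | d x = true} := by
      ext x
      by_cases hx : x = j <;> simp [hx, hjs]
    rw [occupiedIn, this, card_insert_of_notMem (by simp [hj])]
    rfl
  · unfold occupiedIn
    congr 1
    refine filter_congr fun x hx => ?_
    rw [update_of_ne (by rintro rfl; exact hjs hx)]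

lemma sum_numM (s : Finset (Fin n)) :
    ∑ x ∈ s, numM x = diagonal fun c => (occupiedIn s c : ℂ) := by
  ext a b
  simp only [Matrix.sum_apply, numM_apply, diagonal_apply, occupiedIn, card_filter]
  by_cases hab : a = b
  · subst hab
    simp
  · simp [hab]

def firstHalf (n : ℕ) : Finset (Fin n) := {x | (x : ℕ) < n / 2}

lemma Nhalf_eq_diagonal (n : ℕ) :
    Nhalf n = diagonal fun c => (occupiedIn (firstHalf n) c : ℂ) := by
  rw [← sum_numM, Nhalf, firstHalf, sum_filter]

lemma Vhalf_eq_Nhalf_mul_self (n : ℕ) : Vhalf n = Nhalf n * Nhalf n := by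
  simp only [Vhalf, Nhalf, sum_mul_sum, ite_mul, mul_ite, zero_mul, mul_zero, ← ite_and, and_comm]

end Operators

def coreConf (n η : ℕ) : Config n := fun i => decide (1 ≤ (i : ℕ) ∧ (i : ℕ) < η)

section TwoStates

variable {n η : ℕ} (h0 : 0 < n)
include h0

lemma conf0_eq_update :
    conf0 n η = update (coreConf n η) ⟨n / 2, Nat.div_lt_self h0 one_lt_two⟩ true := by
  funext i
  rcases eq_or_ne i ⟨n / 2, Nat.div_lt_self h0 one_lt_two⟩ with rfl | hi
  · simp [conf0]
  · simp [conf0, coreConf, hi, Fin.ext_iff.not.mp hi]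

lemma conf1_eq_update (hη : 0 < η) : conf1 n η = update (coreConf n η) ⟨0, h0⟩ true := by
  funext i
  rcases eq_or_ne i ⟨0, h0⟩ with rfl | hi
  · simp [conf1, hη]
  · simp [conf1, coreConf, hi, Nat.one_le_iff_ne_zero, Fin.ext_iff.not.mp hi]

lemma coreConf_apply_zero : coreConf n η ⟨0, h0⟩ = false := by
  simp [coreConf]

lemma coreConf_apply_half (hs : η ≤ n / 2) :
    coreConf n η ⟨n / 2, Nat.div_lt_self h0 one_lt_two⟩ = false := by
  simp [coreConf]
  omega

lemma zero_ne_half (hn : n / 2 ≠ 0) :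
    (⟨0, h0⟩ : Fin n) ≠ ⟨n / 2, Nat.div_lt_self h0 one_lt_two⟩ := by
  simpa [Fin.ext_iff] using hn.symm

lemma conf0_ne_conf1 (hη : 0 < η) (hs : η ≤ n / 2) : conf0 n η ≠ conf1 n η := by
  intro h
  have := congrFun h ⟨0, h0⟩
  simp [conf0, conf1, hη] at this
  omega

lemma Tall_conf1_conf0 (hη : 0 < η) (hs : η ≤ n / 2) :
    Tall n (conf1 n η) (conf0 n η) =
      signFactor ⟨0, h0⟩ (coreConf n η) *
        signFactor ⟨n / 2, Nat.div_lt_self h0 one_lt_two⟩ (coreConf n η) := by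
  rw [conf0_eq_update h0, conf1_eq_update h0 hη]
  exact Tall_apply_update (zero_ne_half h0 (by omega)) (coreConf_apply_zero h0)
    (coreConf_apply_half h0 hs)

lemma Tall_conf0_conf1_eq_Tall_conf1_conf0 (hη : 0 < η) (hs : η ≤ n / 2) :
    Tall n (conf0 n η) (conf1 n η) = Tall n (conf1 n η) (conf0 n η) := by
  rw [Tall_conf1_conf0 h0 hη hs, conf0_eq_update h0, conf1_eq_update h0 hη, mul_comm]
  exact Tall_apply_update (zero_ne_half h0 (by omega)).symm (coreConf_apply_half h0 hs)
    (coreConf_apply_zero h0)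

lemma norm_Tall_conf1_conf0 (hη : 0 < η) (hs : η ≤ n / 2) :
    ‖Tall n (conf1 n η) (conf0 n η)‖ = 1 := by
  rw [Tall_conf1_conf0 h0 hη hs, norm_mul, norm_signFactor, norm_signFactor, one_mul]

lemma hopM_conf1_conf0 (hη : 0 < η) (hs : η ≤ n / 2) :
    hopM n h0 (conf1 n η) (conf0 n η) = Tall n (conf1 n η) (conf0 n η) := by
  have hne := zero_ne_half h0 (by omega)
  rw [Tall_conf1_conf0 h0 hη hs, hopM, Matrix.sub_apply, conf0_eq_update h0, conf1_eq_update h0 hη,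
    createM_mul_annM_apply_update hne (coreConf_apply_zero h0) (coreConf_apply_half h0 hs),
    createM_mul_annM_apply_update hne (coreConf_apply_zero h0) (coreConf_apply_half h0 hs)]
  simp [hne.symm]

lemma hopM_conf0_conf1 (hη : 0 < η) (hs : η ≤ n / 2) :
    hopM n h0 (conf0 n η) (conf1 n η) = -Tall n (conf1 n η) (conf0 n η) := by
  have hne := zero_ne_half h0 (by omega)
  rw [← Tall_conf0_conf1_eq_Tall_conf1_conf0 h0 hη hs, hopM, Matrix.sub_apply, conf0_eq_update h0,
    conf1_eq_update h0 hη, Tall_apply_update hne.symm (coreConf_apply_half h0 hs)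
      (coreConf_apply_zero h0),
    createM_mul_annM_apply_update hne.symm (coreConf_apply_half h0 hs) (coreConf_apply_zero h0),
    createM_mul_annM_apply_update hne.symm (coreConf_apply_half h0 hs) (coreConf_apply_zero h0)]
  simp [hne]

lemma hopM_apply_self (hn : n / 2 ≠ 0) (c : Config n) : hopM n h0 c c = 0 := by
  rw [hopM, Matrix.sub_apply, createM_mul_annM_apply_self (zero_ne_half h0 hn),
    createM_mul_annM_apply_self (zero_ne_half h0 hn).symm, sub_zero]

end TwoStates

section Counting

variable {n η : ℕ}

lemma wt_conf1 (hη : η ≤ n) : wt (conf1 n η) = η := by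
  simpa [wt, conf1, Fin.card_filter_val_lt] using hη

lemma occupiedIn_firstHalf_conf1 (hs : η ≤ n / 2) : occupiedIn (firstHalf n) (conf1 n η) = η := by
  have hfilter : {x ∈ firstHalf n | conf1 n η x = true} =
      ({x | (x : ℕ) < η} : Finset (Fin n)) := by
    ext x
    simp only [firstHalf, conf1, mem_filter, mem_univ, true_and, decide_eq_true_eq]
    omega
  rw [occupiedIn, hfilter, Fin.card_filter_val_lt]
  omega

lemma wt_eq_occupiedIn_univ (c : Config n) : wt c = occupiedIn univ c := rfl

lemma wt_conf0 (h0 : 0 < n) (hη : 0 < η) (hs : η ≤ n / 2) : wt (conf0 n η) = wt (conf1 n η) := by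
  rw [wt_eq_occupiedIn_univ, wt_eq_occupiedIn_univ, conf0_eq_update h0, conf1_eq_update h0 hη,
    occupiedIn_update_true (coreConf_apply_half h0 hs),
    occupiedIn_update_true (coreConf_apply_zero h0)]
  simp

lemma occupiedIn_firstHalf_conf1_eq (h0 : 0 < n) (hη : 0 < η) (hs : η ≤ n / 2) :
    occupiedIn (firstHalf n) (conf1 n η) = occupiedIn (firstHalf n) (conf0 n η) + 1 := by
  rw [conf0_eq_update h0, conf1_eq_update h0 hη, occupiedIn_update_true (coreConf_apply_half h0 hs),
    occupiedIn_update_true (coreConf_apply_zero h0)]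
  simp [firstHalf]
  omega

end Counting

lemma projTwo_eq_diagonal (n η : ℕ) :
    projTwo n η = diagonal fun c =>
      (if c = conf0 n η then 1 else 0) + (if c = conf1 n η then 1 else 0) := by
  ext a b
  by_cases hab : a = b
  · subst hab
    simp [projTwo]
  · have : ¬(a = conf0 n η ∧ b = conf0 n η) ∧ ¬(a = conf1 n η ∧ b = conf1 n η) := by
      constructor <;> rintro ⟨rfl, rfl⟩ <;> exact hab rfl
    simp [projTwo, hab, this]

lemma commute_projTwo_Nhalf (n η : ℕ) : Commute (projTwo n η) (Nhalf n) := by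
  rw [projTwo_eq_diagonal, Nhalf_eq_diagonal]
  exact commute_diagonal _ _

lemma projTwo_mul_lie_Nhalf_Tall_mul_projTwo {n η : ℕ} (h0 : 0 < n) (hη : 0 < η)
    (hs : η ≤ n / 2) :
    projTwo n η * ⁅Nhalf n, Tall n⁆ * projTwo n η = projTwo n η * hopM n h0 * projTwo n η := by
  rw [projTwo_eq_diagonal]
  refine diagonal_mul_mul_diagonal_congr fun a b ha hb => ?_
  have mem : ∀ c : Config n,
      (if c = conf0 n η then 1 else 0) + (if c = conf1 n η then 1 else 0) ≠ (0 : ℂ) →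
        c = conf0 n η ∨ c = conf1 n η := by
    intro c hc
    by_contra! h
    simp [h.1, h.2] at hc
  have hν := occupiedIn_firstHalf_conf1_eq h0 hη hs
  rw [Nhalf_eq_diagonal, diagonal_lie_apply]
  rcases mem a ha with rfl | rfl <;> rcases mem b hb with rfl | rfl
  · simp [hopM_apply_self h0 (by omega : n / 2 ≠ 0)]
  · rw [hopM_conf0_conf1 h0 hη hs, Tall_conf0_conf1_eq_Tall_conf1_conf0 h0 hη hs, hν]
    push_cast
    ring
  · rw [hopM_conf1_conf0 h0 hη hs, hν]
    push_cast
    ring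
  · simp [hopM_apply_self h0 (by omega : n / 2 ≠ 0)]

lemma projTwo_mul_lie_Vhalf_Tall_mul_projTwo {n η : ℕ} (h0 : 0 < n) (hη : 0 < η)
    (hs : η ≤ n / 2) :
    projTwo n η * ⁅Vhalf n, Tall n⁆ * projTwo n η =
      projTwo n η * (Nhalf n * hopM n h0 + hopM n h0 * Nhalf n) * projTwo n η := by
  rw [Vhalf_eq_Nhalf_mul_self, mul_self_lie, (commute_projTwo_Nhalf n η).mul_add_mul_compress,
    (commute_projTwo_Nhalf n η).mul_add_mul_compress,
    projTwo_mul_lie_Nhalf_Tall_mul_projTwo h0 hη hs]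

lemma inner_basisVec_appM {n : ℕ} (A : Matrix (Config n) (Config n) ℂ) (a b : Config n) :
    inner ℂ (basisVec a) (appM A (basisVec b)) = A a b := by
  have happ : appM A (basisVec b) = WithLp.toLp 2 (Matrix.toLin' A (Pi.single b 1)) := by
    simp only [appM, basisVec, EuclideanSpace.single, ← PiLp.toLp_single,
      Matrix.toEuclideanCLM_toLp, Matrix.toLin'_apply]
  rw [happ, Matrix.toLin'_apply, Matrix.mulVec_single, basisVec, EuclideanSpace.inner_single_left]
  simp

section PsiEta

variable {n η : ℕ}

lemma inner_psiEta_appM (M : Matrix (Config n) (Config n) ℂ) :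
    inner ℂ (psiEta n η) (appM M (psiEta n η)) =
      2⁻¹ * ((M (conf0 n η) (conf0 n η) + M (conf1 n η) (conf1 n η)) +
        Complex.I * M (conf0 n η) (conf1 n η) - Complex.I * M (conf1 n η) (conf0 n η)) := by
  have hsqrt : ((Real.sqrt 2 : ℂ))⁻¹ * ((Real.sqrt 2 : ℂ))⁻¹ = 2⁻¹ := by
    rw [← mul_inv, ← Complex.ofReal_mul, Real.mul_self_sqrt zero_le_two, Complex.ofReal_ofNat]
  simp only [psiEta, map_smul, map_add, inner_smul_left, inner_smul_right, inner_add_left,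
    inner_add_right, inner_basisVec_appM, Complex.conj_I, map_inv₀, Complex.conj_ofReal]
  linear_combination (M (conf0 n η) (conf0 n η) + M (conf1 n η) (conf1 n η) +
    Complex.I * M (conf0 n η) (conf1 n η) - Complex.I * M (conf1 n η) (conf0 n η)) * hsqrt -
    (Real.sqrt 2 : ℂ)⁻¹ ^ 2 * M (conf1 n η) (conf1 n η) * Complex.I_sq

lemma inner_psiEta_appM_lie_diagonal (w : Config n → ℂ) (X : Matrix (Config n) (Config n) ℂ) :
    inner ℂ (psiEta n η) (appM ⁅diagonal w, X⁆ (psiEta n η)) =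
      2⁻¹ * Complex.I * (w (conf0 n η) - w (conf1 n η)) *
        (X (conf0 n η) (conf1 n η) + X (conf1 n η) (conf0 n η)) := by
  rw [inner_psiEta_appM]
  simp only [diagonal_lie_apply]
  ring

lemma norm_psiEta (hne : conf0 n η ≠ conf1 n η) : ‖psiEta n η‖ = 1 := by
  have h := inner_psiEta_appM (n := n) (η := η) 1
  simp only [appM, map_one, one_apply_eq_self, one_apply_eq, one_apply_ne hne,
    one_apply_ne hne.symm] at h
  rw [← pow_eq_one_iff_of_nonneg (norm_nonneg _) two_ne_zero, ← inner_self_eq_norm_sq (𝕜 := ℂ), h]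
  norm_num

lemma inner_psiEta_appM_mul_projM (h0 : wt (conf0 n η) = η) (h1 : wt (conf1 n η) = η)
    (X : Matrix (Config n) (Config n) ℂ) :
    inner ℂ (psiEta n η) (appM (X * projM n η) (psiEta n η)) =
      inner ℂ (psiEta n η) (appM X (psiEta n η)) := by
  have hX : ∀ a b, wt b = η → (X * projM n η) a b = X a b := fun a b hb => by
    simp [mul_apply, projM, hb]
  simp only [inner_psiEta_appM, hX _ _ h0, hX _ _ h1]

end PsiEta

lemma norm_inner_psiEta_lie_Vhalf_Tall {n η : ℕ} (h0 : 0 < n) (hη : 0 < η) (hs : η ≤ n / 2) :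
    ‖inner ℂ (psiEta n η) (appM ⁅Vhalf n, Tall n⁆ (psiEta n η))‖ = 2 * (η : ℝ) - 1 := by
  set s := Tall n (conf1 n η) (conf0 n η)
  have hν1 := occupiedIn_firstHalf_conf1 hs
  have hν0 : (occupiedIn (firstHalf n) (conf0 n η) : ℂ) = η - 1 := by
    have h : (η : ℂ) = occupiedIn (firstHalf n) (conf0 n η) + 1 := by
      exact_mod_cast hν1.symm.trans (occupiedIn_firstHalf_conf1_eq h0 hη hs)
    linear_combination -h
  have hη1 : (1 : ℝ) ≤ η := by exact_mod_cast hη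
  rw [Vhalf_eq_Nhalf_mul_self, Nhalf_eq_diagonal, diagonal_mul_diagonal,
    inner_psiEta_appM_lie_diagonal, Tall_conf0_conf1_eq_Tall_conf1_conf0 h0 hη hs, hν0, hν1]
  calc ‖2⁻¹ * Complex.I * ((η - 1) * (η - 1) - η * η) * (s + s)‖
      = ‖Complex.I * s * ((1 - 2 * η : ℝ) : ℂ)‖ := by push_cast; ring_nf
    _ = 2 * η - 1 := by
      rw [norm_mul, norm_mul, Complex.norm_I, norm_Tall_conf1_conf0 h0 hη hs, Complex.norm_real,
        Real.norm_eq_abs, abs_of_nonpos (by linarith)]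
      ring

/-- **Tightness: lower bound for `‖[V,T]‖_η`.** Projected onto the span of
`|ψ₀⟩, |ψ₁⟩`, the commutator `[V,T]` equals
`(∑_{x<n/2} N_x)(A₀†A_{n/2} − A_{n/2}†A₀) + (A₀†A_{n/2} − A_{n/2}†A₀)(∑_{y<n/2} N_y)`;
consequently `|⟨ψ_η|[V,T]|ψ_η⟩| ≥ 2η − O(1)`, and `‖[V,T]‖_η = Ω(η)`. -/
theorem commutator_VT_lower_bound :
    ∃ C c C' : ℝ, 0 < c ∧
      ∀ (n η : ℕ) (h0 : 0 < n), Even n → 0 < η → η ≤ n / 2 →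
        (projTwo n η * ⁅Vhalf n, Tall n⁆ * projTwo n η =
          projTwo n η * (Nhalf n * hopM n h0 + hopM n h0 * Nhalf n) * projTwo n η) ∧
        2 * (η : ℝ) - C ≤
          ‖(inner ℂ (psiEta n η) (appM ⁅Vhalf n, Tall n⁆ (psiEta n η)) : ℂ)‖ ∧
        c * (η : ℝ) - C' ≤ fsem η ⁅Vhalf n, Tall n⁆ := by
  refine ⟨1, 2, 1, two_pos, fun n η h0 _ hη hs => ⟨?_, ?_, ?_⟩⟩
  · exact projTwo_mul_lie_Vhalf_Tall_mul_projTwo h0 hη hs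
  · exact (norm_inner_psiEta_lie_Vhalf_Tall h0 hη hs).ge
  · have hwt1 : wt (conf1 n η) = η := wt_conf1 (hs.trans (Nat.div_le_self n 2))
    calc 2 * (η : ℝ) - 1
        = ‖inner ℂ (psiEta n η) (appM (⁅Vhalf n, Tall n⁆ * projM n η) (psiEta n η))‖ := by
          rw [inner_psiEta_appM_mul_projM ((wt_conf0 h0 hη hs).trans hwt1) hwt1,
            norm_inner_psiEta_lie_Vhalf_Tall h0 hη hs]
      _ ≤ fsem η ⁅Vhalf n, Tall n⁆ :=
          norm_inner_apply_le_opNorm _ (norm_psiEta (conf0_ne_conf1 h0 hη hs))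
end
end
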